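/- (Theorem 1) Let P be a symmetric positive definite n×n real matrix with condition number κ(P) = λ_max(P)/λ_min(P), and let P_R be a symmetric n×n real matrix such that ‖P_R − P‖₂ ≤ δ·‖P‖₂ for some δ ∈ [0,1) satisfying δ·κ(P) < 1. Let C_p be a p×n real matrix, and let E_R be a q×k real matrix and C_r a q×(n−k) real matrix, not both zero, and let C_{r,R} = [E_R, C_r] be the q×n matrix formed by placing E_R and C_r side by side (so that ‖C_{r,R}‖_F² = ‖E_R‖_F² + ‖C_r‖_F²). Then tr(C_p·P_R·C_pᵀ) / tr(C_{r,R}·P_R·C_{r,R}ᵀ) ≤ [κ(P)·(1+δ)/(1 − δ·κ(P))] · ‖C_p‖_F² / (‖E_R‖_F² + ‖C_r‖_F²), and in particular tr(C_{r,R}·P_R·C_{r,R}ᵀ) > 0 so the ratio is well defined. -/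

import Mathlib

/-!
For symmetric `M` the spectrum lies in `[-‖M‖, ‖M‖]`, so `-‖M‖ • 1 ≤ M ≤ ‖M‖ • 1` in the Loewner
order, and `‖P‖ ≤ λ_max(P)` for `P ⪰ 0`. Applied to `M = P_R - P` together with
`λ_min(P) • 1 ≤ P ≤ λ_max(P) • 1`, the perturbation bound gives `c • 1 ≤ P_R ≤ d • 1` with
`c = λ_min - δ λ_max > 0` (this is `δ κ < 1`) and `d = λ_max (1 + δ)`. Conjugation `X ↦ C X Cᵀ`
preserves the Loewner order and the trace of a positive semidefinite matrix is nonnegative, so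
`c ‖C‖_F² ≤ tr (C P_R Cᵀ) ≤ d ‖C‖_F²` for every `C`. Dividing the upper bound for `C_p` by the lower
bound for `[E_R, C_r]` gives the claim, since `d / c = κ (1 + δ) / (1 - δ κ)`.
-/

open Matrix
open scoped Matrix.Norms.L2Operator MatrixOrder

namespace Matrix

section Loewner

variable {n : Type*} [Fintype n] [DecidableEq n] {A B : Matrix n n ℝ}

theorem IsHermitian.algebraMap_iInf_eigenvalues_le (hA : A.IsHermitian) :
    algebraMap ℝ (Matrix n n ℝ) (⨅ i, hA.eigenvalues i) ≤ A := by
  rw [algebraMap_le_iff_le_spectrum hA.isSelfAdjoint, hA.spectrum_real_eq_range_eigenvalues]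
  rintro _ ⟨i, rfl⟩
  exact ciInf_le (Set.finite_range _).bddBelow i

theorem IsHermitian.le_algebraMap_iSup_eigenvalues (hA : A.IsHermitian) :
    A ≤ algebraMap ℝ (Matrix n n ℝ) (⨆ i, hA.eigenvalues i) := by
  rw [le_algebraMap_iff_spectrum_le hA.isSelfAdjoint, hA.spectrum_real_eq_range_eigenvalues]
  rintro _ ⟨i, rfl⟩
  exact le_ciSup (Set.finite_range _).bddAbove i

theorem IsHermitian.abs_le_l2_opNorm_of_mem_spectrum (hA : A.IsHermitian) {x : ℝ}
    (hx : x ∈ spectrum ℝ A) : |x| ≤ ‖A‖ :=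
  IsometricContinuousFunctionalCalculus.norm_spectrum_le A hx hA.isSelfAdjoint

theorem IsHermitian.neg_algebraMap_l2_opNorm_le (hA : A.IsHermitian) :
    -algebraMap ℝ (Matrix n n ℝ) ‖A‖ ≤ A := by
  rw [← map_neg, algebraMap_le_iff_le_spectrum hA.isSelfAdjoint]
  exact fun x hx => neg_le.mp ((neg_le_abs x).trans (hA.abs_le_l2_opNorm_of_mem_spectrum hx))

theorem IsHermitian.le_algebraMap_l2_opNorm (hA : A.IsHermitian) :
    A ≤ algebraMap ℝ (Matrix n n ℝ) ‖A‖ := by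
  rw [le_algebraMap_iff_spectrum_le hA.isSelfAdjoint]
  exact fun x hx => (le_abs_self x).trans (hA.abs_le_l2_opNorm_of_mem_spectrum hx)

theorem PosSemidef.l2_opNorm_le_iSup_eigenvalues (hA : A.PosSemidef) :
    ‖A‖ ≤ ⨆ i, hA.1.eigenvalues i := by
  have h := norm_cfc_le (𝕜 := ℝ) (p := IsSelfAdjoint) (f := id) (a := A)
    (Real.iSup_nonneg hA.eigenvalues_nonneg) ?_
  · rwa [cfc_id ℝ A hA.1.isSelfAdjoint] at h
  rw [hA.1.spectrum_real_eq_range_eigenvalues]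
  rintro _ ⟨i, rfl⟩
  rw [id, Real.norm_of_nonneg (hA.eigenvalues_nonneg i)]
  exact le_ciSup (Set.finite_range _).bddAbove i

theorem PosDef.iInf_eigenvalues_pos [Nonempty n] (hA : A.PosDef) :
    0 < ⨅ i, hA.1.eigenvalues i := by
  obtain ⟨i, hi⟩ := exists_eq_ciInf_of_finite (f := hA.1.eigenvalues)
  exact hi ▸ hA.eigenvalues_pos i

theorem IsHermitian.algebraMap_sub_l2_opNorm_le (hA : A.IsHermitian) (hB : B.IsHermitian) :
    algebraMap ℝ (Matrix n n ℝ) ((⨅ i, hA.eigenvalues i) - ‖B - A‖) ≤ B := by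
  simpa [map_sub, sub_eq_add_neg] using
    add_le_add hA.algebraMap_iInf_eigenvalues_le (hB.sub hA).neg_algebraMap_l2_opNorm_le

theorem IsHermitian.le_algebraMap_add_l2_opNorm (hA : A.IsHermitian) (hB : B.IsHermitian) :
    B ≤ algebraMap ℝ (Matrix n n ℝ) ((⨆ i, hA.eigenvalues i) + ‖B - A‖) := by
  simpa [map_add] using
    add_le_add hA.le_algebraMap_iSup_eigenvalues (hB.sub hA).le_algebraMap_l2_opNorm

end Loewner

section Trace

variable {l m n : Type*} [Fintype l] [Fintype m] [Fintype n]

theorem trace_mul_mul_transpose_mono {A B : Matrix n n ℝ} (h : A ≤ B) (C : Matrix m n ℝ) :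
    (C * A * Cᵀ).trace ≤ (C * B * Cᵀ).trace := by
  have := (h.mul_mul_conjTranspose_same C).trace_nonneg
  rw [conjTranspose_eq_transpose_of_trivial, Matrix.mul_sub, Matrix.sub_mul, trace_sub] at this
  linarith

theorem trace_mul_algebraMap_mul_transpose [DecidableEq n] (C : Matrix m n ℝ) (r : ℝ) :
    (C * algebraMap ℝ (Matrix n n ℝ) r * Cᵀ).trace = r * (Cᵀ * C).trace := by
  rw [Algebra.algebraMap_eq_smul_one, Matrix.mul_smul, Matrix.mul_one, Matrix.smul_mul,
    trace_smul, trace_mul_comm, smul_eq_mul]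

theorem trace_transpose_mul_self_nonneg (C : Matrix m n ℝ) : 0 ≤ (Cᵀ * C).trace := by
  simpa [conjTranspose_eq_transpose_of_trivial] using
    (posSemidef_conjTranspose_mul_self C).trace_nonneg

theorem trace_transpose_mul_self_pos {C : Matrix m n ℝ} (hC : C ≠ 0) : 0 < (Cᵀ * C).trace := by
  refine (trace_transpose_mul_self_nonneg C).lt_of_ne' ?_
  simpa [conjTranspose_eq_transpose_of_trivial] using
    (trace_conjTranspose_mul_self_eq_zero_iff (A := C)).not.mpr hC

theorem trace_mul_mul_transpose_div_le [DecidableEq n] {B : Matrix n n ℝ} {c d : ℝ} (hc : 0 < c)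
    (hcB : algebraMap ℝ (Matrix n n ℝ) c ≤ B) (hBd : B ≤ algebraMap ℝ (Matrix n n ℝ) d)
    {C : Matrix m n ℝ} (hC : C ≠ 0) (D : Matrix l n ℝ) :
    0 < (C * B * Cᵀ).trace ∧
      (D * B * Dᵀ).trace / (C * B * Cᵀ).trace ≤ d / c * (Dᵀ * D).trace / (Cᵀ * C).trace := by
  have hC_lo := trace_mul_mul_transpose_mono hcB C
  have hD_lo := trace_mul_mul_transpose_mono hcB D
  have hD_hi := trace_mul_mul_transpose_mono hBd D
  rw [trace_mul_algebraMap_mul_transpose] at hC_lo hD_lo hD_hi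
  have hCC := trace_transpose_mul_self_pos hC
  have hDD := trace_transpose_mul_self_nonneg D
  refine ⟨(mul_pos hc hCC).trans_le hC_lo, ?_⟩
  calc (D * B * Dᵀ).trace / (C * B * Cᵀ).trace
      ≤ (D * B * Dᵀ).trace / (c * (Cᵀ * C).trace) :=
        div_le_div_of_nonneg_left ((mul_nonneg hc.le hDD).trans hD_lo) (by positivity) hC_lo
    _ ≤ d * (Dᵀ * D).trace / (c * (Cᵀ * C).trace) := by gcongr
    _ = d / c * (Dᵀ * D).trace / (Cᵀ * C).trace := by field_simp

theorem trace_transpose_mul_self_fromCols {n₁ n₂ : Type*} [Fintype n₁] [Fintype n₂]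
    (E : Matrix m n₁ ℝ) (F : Matrix m n₂ ℝ) :
    ((fromCols E F)ᵀ * fromCols E F).trace = (Eᵀ * E).trace + (Fᵀ * F).trace := by
  rw [trace_mul_comm, transpose_fromCols, fromCols_mul_fromRows, trace_add, trace_mul_comm E,
    trace_mul_comm F]

end Trace

end Matrix

theorem stmt_9_general {k l p q : ℕ}
    (P P_R : Matrix (Fin k ⊕ Fin l) (Fin k ⊕ Fin l) ℝ)
    (hP : P.PosDef) (hPR : P_R.IsHermitian) (δ : ℝ)
    (hδ0 : 0 ≤ δ)
    (hδκ : δ * ((⨆ i, hP.1.eigenvalues i) / (⨅ i, hP.1.eigenvalues i)) < 1)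
    (hpert : ‖P_R - P‖ ≤ δ * ‖P‖)
    (C_p : Matrix (Fin p) (Fin k ⊕ Fin l) ℝ)
    (E_R : Matrix (Fin q) (Fin k) ℝ) (C_r : Matrix (Fin q) (Fin l) ℝ)
    (hnz : ¬(E_R = 0 ∧ C_r = 0)) :
    0 < (fromCols E_R C_r * P_R * (fromCols E_R C_r)ᵀ).trace ∧
      (C_p * P_R * C_pᵀ).trace / (fromCols E_R C_r * P_R * (fromCols E_R C_r)ᵀ).trace ≤
        ((⨆ i, hP.1.eigenvalues i) / (⨅ i, hP.1.eigenvalues i)) * (1 + δ) /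
            (1 - δ * ((⨆ i, hP.1.eigenvalues i) / (⨅ i, hP.1.eigenvalues i))) *
          (C_pᵀ * C_p).trace / ((E_Rᵀ * E_R).trace + (C_rᵀ * C_r).trace) := by
  set a := ⨅ i, hP.1.eigenvalues i
  set b := ⨆ i, hP.1.eigenvalues i
  have hC : fromCols E_R C_r ≠ 0 := fun h =>
    hnz ((fromCols_ext_iff _ _ _ _).mp (h.trans fromCols_zero.symm))
  have : Nonempty (Fin k ⊕ Fin l) := by
    by_contra! h
    exact hC (Matrix.ext fun _ j => (h.false j).elim)
  have ha : 0 < a := hP.iInf_eigenvalues_pos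
  have hnorm : ‖P_R - P‖ ≤ δ * b :=
    hpert.trans (mul_le_mul_of_nonneg_left hP.posSemidef.l2_opNorm_le_iSup_eigenvalues hδ0)
  have hgap : 0 < a - δ * b := by
    rw [mul_div_assoc', div_lt_one ha] at hδκ
    linarith
  have hlo : algebraMap ℝ _ (a - δ * b) ≤ P_R :=
    (algebraMap_mono _ (by linarith)).trans (hP.1.algebraMap_sub_l2_opNorm_le hPR)
  have hhi : P_R ≤ algebraMap ℝ _ (b * (1 + δ)) :=
    (hP.1.le_algebraMap_add_l2_opNorm hPR).trans (algebraMap_mono _ (by linarith))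
  obtain ⟨hpos, hratio⟩ := trace_mul_mul_transpose_div_le hgap hlo hhi hC C_p
  refine ⟨hpos, ?_⟩
  rw [trace_transpose_mul_self_fromCols] at hratio
  convert hratio using 3
  field_simp

/-- **Theorem 1.** Let `P` be symmetric positive definite with condition
number `κ(P) = λ_max(P)/λ_min(P)` and let `P_R` be symmetric with `‖P_R − P‖₂ ≤ δ·‖P‖₂`
for some `δ ∈ [0,1)` with `δ·κ(P) < 1`.  For any `C_p`, and `C_{r,R} = [E_R, C_r]`
(horizontal concatenation, with `E_R`, `C_r` not both zero),
`tr(C_p·P_R·C_pᵀ)/tr(C_{r,R}·P_R·C_{r,R}ᵀ)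
  ≤ [κ(P)(1+δ)/(1−δκ(P))]·‖C_p‖_F²/(‖E_R‖_F² + ‖C_r‖_F²)`,
and in particular `tr(C_{r,R}·P_R·C_{r,R}ᵀ) > 0`.  Here `‖M‖_F² = tr(Mᵀ·M)`. -/
theorem stmt_9 {k l p q : ℕ}
    (P P_R : Matrix (Fin k ⊕ Fin l) (Fin k ⊕ Fin l) ℝ)
    (hP : P.PosDef) (hPR : P_R.IsHermitian) (δ : ℝ)
    (hδ0 : 0 ≤ δ) (hδ1 : δ < 1)
    (hδκ : δ * ((⨆ i, hP.1.eigenvalues i) / (⨅ i, hP.1.eigenvalues i)) < 1)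
    (hpert : ‖P_R - P‖ ≤ δ * ‖P‖)
    (C_p : Matrix (Fin p) (Fin k ⊕ Fin l) ℝ)
    (E_R : Matrix (Fin q) (Fin k) ℝ) (C_r : Matrix (Fin q) (Fin l) ℝ)
    (hnz : ¬(E_R = 0 ∧ C_r = 0)) :
    0 < (fromCols E_R C_r * P_R * (fromCols E_R C_r)ᵀ).trace ∧
      (C_p * P_R * C_pᵀ).trace / (fromCols E_R C_r * P_R * (fromCols E_R C_r)ᵀ).trace ≤
        ((⨆ i, hP.1.eigenvalues i) / (⨅ i, hP.1.eigenvalues i)) * (1 + δ) /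
            (1 - δ * ((⨆ i, hP.1.eigenvalues i) / (⨅ i, hP.1.eigenvalues i))) *
          (C_pᵀ * C_p).trace / ((E_Rᵀ * E_R).trace + (C_rᵀ * C_r).trace) :=
  stmt_9_general P P_R hP hPR δ hδ0 hδκ hpert C_p E_R C_r hnz
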